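/- arXiv:1907.00485 — 2 statements merged into one kernel-verified Lean document; each statement's English description precedes it below -/
import Mathlib

section
/- Assume max{δ, ν} ≤ 1/4. Let M ∈ Ŵ ∩ S satisfy λ_1(M) > max{2δ, λ_2(M)}. Then min over j ∈ {1,…,m} and s ∈ {−1, 1} of ‖s·w_j − u_1(M)‖ is at most √8 · (c_r^{−1/2}·√ν + ν + 2δ) / (λ_1(M) − λ_2(M)). -/
open Matrix

noncomputable def vnorm {d : ℕ} (v : Fin d → ℝ) : ℝ := Real.sqrt (∑ i, v i ^ 2)

noncomputable def frobInner {d : ℕ} (M N : Matrix (Fin d) (Fin d) ℝ) : ℝ :=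
  ∑ i, ∑ j, M i j * N i j

noncomputable def frobNorm {d : ℕ} (M : Matrix (Fin d) (Fin d) ℝ) : ℝ :=
  Real.sqrt (frobInner M M)

def IsOrthProjOn {d : ℕ} (V : Submodule ℝ (Matrix (Fin d) (Fin d) ℝ))
    (P : Matrix (Fin d) (Fin d) ℝ →ₗ[ℝ] Matrix (Fin d) (Fin d) ℝ) : Prop :=
  (∀ X, P X ∈ V) ∧ (∀ X ∈ V, P X = X) ∧ ∀ X Y, frobInner (P X) Y = frobInner X (P Y)

noncomputable def hsNorm {d : ℕ}
    (T : Matrix (Fin d) (Fin d) ℝ →ₗ[ℝ] Matrix (Fin d) (Fin d) ℝ) : ℝ :=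
  Real.sqrt (∑ i, ∑ j,
    frobInner (T (Matrix.single i j 1)) (T (Matrix.single i j 1)))

noncomputable def specNorm {d : ℕ} (M : Matrix (Fin d) (Fin d) ℝ) : ℝ :=
  sSup {r : ℝ | ∃ v : Fin d → ℝ, (∑ i, v i ^ 2) = 1 ∧ r = |dotProduct v (M.mulVec v)|}

noncomputable def lamTop {d : ℕ} (M : Matrix (Fin d) (Fin d) ℝ) : ℝ :=
  sSup {r : ℝ | ∃ v : Fin d → ℝ, (∑ i, v i ^ 2) = 1 ∧ r = dotProduct v (M.mulVec v)}

def IsLocMaxSpec {d : ℕ} (V : Submodule ℝ (Matrix (Fin d) (Fin d) ℝ))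
    (M : Matrix (Fin d) (Fin d) ℝ) : Prop :=
  M ∈ V ∧ frobNorm M ≤ 1 ∧
    ∃ ε > 0, ∀ X ∈ V, frobNorm X ≤ 1 → frobNorm (X - M) < ε → specNorm X ≤ specNorm M

/-! Write `P_W M = ∑ σ_j w_j ⊗ w_j`. Then `‖M - P_W M‖_F ≤ δ`, and the Riesz bound gives
`∑ σ_j² ≤ c_r⁻¹` because `P_W` is a contraction. Let `σ_k` be the largest coefficient. Testing
`M` against `u₁` gives `λ₁ ≤ σ_k C_F + δ`, so `σ_k ≥ λ₁ - δ - c_r^{-1/2} √ν / 2`. Since the frame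
bound forces `⟨w_j, w_k⟩² ≤ ν` for `j ≠ k`, the vector `w_k` is an approximate eigenvector:
`‖M w_k - σ_k w_k‖ ≤ δ + √C_F c_r^{-1/2} √ν`. As `σ_k` stays about a spectral gap away from
`λ₂, …, λ_d`, expanding `w_k` in the eigenbasis of `M` (Davis–Kahan) shows that `w_k` is almost
parallel to `u₁`, and the sign `s` fixes the orientation. -/

open Finset WithLp

attribute [local instance] Matrix.frobeniusNormedAddCommGroup Matrix.frobeniusNormSMulClass

section Norms

variable {d : ℕ}

lemma vnorm_eq_norm (v : Fin d → ℝ) : vnorm v = ‖toLp 2 v‖ := by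
  simp [vnorm, EuclideanSpace.norm_eq]

lemma vnorm_sq (v : Fin d → ℝ) : vnorm v ^ 2 = ∑ i, v i ^ 2 :=
  Real.sq_sqrt (by positivity)

lemma dotProduct_self_eq_vnorm_sq (v : Fin d → ℝ) : v ⬝ᵥ v = vnorm v ^ 2 := by
  rw [vnorm_sq]
  simp only [dotProduct, sq]

lemma vnorm_nonneg (v : Fin d → ℝ) : 0 ≤ vnorm v :=
  Real.sqrt_nonneg _

lemma vnorm_add_le (v w : Fin d → ℝ) : vnorm (v + w) ≤ vnorm v + vnorm w := by
  simpa [vnorm_eq_norm] using norm_add_le (toLp 2 v) (toLp 2 w)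

lemma abs_dotProduct_le (v w : Fin d → ℝ) : |v ⬝ᵥ w| ≤ vnorm v * vnorm w := by
  simpa [vnorm_eq_norm, EuclideanSpace.inner_toLp_toLp, dotProduct_comm]
    using abs_real_inner_le_norm (toLp 2 v) (toLp 2 w)

lemma frobNorm_eq_norm (M : Matrix (Fin d) (Fin d) ℝ) : frobNorm M = ‖M‖ := by
  simp [frobNorm, frobInner, frobenius_norm_def, Real.sqrt_eq_rpow, ← sq]

lemma frobNorm_nonneg (M : Matrix (Fin d) (Fin d) ℝ) : 0 ≤ frobNorm M :=
  Real.sqrt_nonneg _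

lemma frobNorm_sq (M : Matrix (Fin d) (Fin d) ℝ) : frobNorm M ^ 2 = frobInner M M :=
  Real.sq_sqrt (sum_nonneg fun i _ => sum_nonneg fun j _ => mul_self_nonneg (M i j))

lemma frobNorm_add_sq (A B : Matrix (Fin d) (Fin d) ℝ) :
    frobNorm (A + B) ^ 2 = frobNorm A ^ 2 + 2 * frobInner A B + frobNorm B ^ 2 := by
  simp only [frobNorm_sq, frobInner, Matrix.add_apply, mul_sum, ← sum_add_distrib]
  exact sum_congr rfl fun i _ => sum_congr rfl fun j _ => by ring

lemma vnorm_mulVec_le (E : Matrix (Fin d) (Fin d) ℝ) (v : Fin d → ℝ) :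
    vnorm (E *ᵥ v) ≤ frobNorm E * vnorm v := by
  have h := frobenius_norm_mul E (replicateCol Unit v)
  rwa [← replicateCol_mulVec, frobenius_norm_replicateCol, frobenius_norm_replicateCol,
    ← vnorm_eq_norm, ← vnorm_eq_norm, ← frobNorm_eq_norm] at h

lemma abs_dotProduct_mulVec_le (E : Matrix (Fin d) (Fin d) ℝ) (v : Fin d → ℝ) :
    |v ⬝ᵥ E *ᵥ v| ≤ frobNorm E * vnorm v ^ 2 :=
  calc |v ⬝ᵥ E *ᵥ v| ≤ vnorm v * vnorm (E *ᵥ v) := abs_dotProduct_le _ _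
    _ ≤ vnorm v * (frobNorm E * vnorm v) :=
        mul_le_mul_of_nonneg_left (vnorm_mulVec_le E v) (vnorm_nonneg v)
    _ = frobNorm E * vnorm v ^ 2 := by ring

lemma exists_sign_vnorm_smul_sub_eq {a b : Fin d → ℝ} (ha : vnorm a = 1) (hb : vnorm b = 1) :
    ∃ s : ℝ, (s = 1 ∨ s = -1) ∧ vnorm (s • a - b) = √(2 - 2 * |a ⬝ᵥ b|) := by
  have haa : a ⬝ᵥ a = 1 := by rw [dotProduct_self_eq_vnorm_sq, ha, one_pow]
  have hbb : b ⬝ᵥ b = 1 := by rw [dotProduct_self_eq_vnorm_sq, hb, one_pow]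
  have hsq : ∀ s : ℝ, s ^ 2 = 1 → vnorm (s • a - b) = √(2 - 2 * (s * (a ⬝ᵥ b))) := by
    intro s hs
    rw [← Real.sqrt_sq (vnorm_nonneg _), ← dotProduct_self_eq_vnorm_sq]
    congr 1
    simp only [sub_dotProduct, dotProduct_sub, smul_dotProduct, dotProduct_smul, smul_eq_mul,
      dotProduct_comm b a, haa, hbb]
    linear_combination hs
  rcases le_or_gt 0 (a ⬝ᵥ b) with h | h
  · exact ⟨1, Or.inl rfl, by rw [hsq 1 (one_pow 2), abs_of_nonneg h, one_mul]⟩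
  · exact ⟨-1, Or.inr rfl, by rw [hsq (-1) (by norm_num), abs_of_neg h, neg_one_mul]⟩

end Norms

section Projections

variable {d : ℕ}

lemma frobNorm_apply_le_hsNorm_mul
    (T : Matrix (Fin d) (Fin d) ℝ →ₗ[ℝ] Matrix (Fin d) (Fin d) ℝ) (X : Matrix (Fin d) (Fin d) ℝ) :
    frobNorm (T X) ≤ hsNorm T * frobNorm X := by
  have hTX : T X = ∑ p : Fin d × Fin d, X p.1 p.2 • T (single p.1 p.2 1) := by
    conv_lhs => rw [matrix_eq_sum_single X]
    rw [Fintype.sum_prod_type, map_sum]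
    refine sum_congr rfl fun i _ => ?_
    rw [map_sum]
    refine sum_congr rfl fun j _ => ?_
    rw [← map_smul, smul_single, smul_eq_mul, mul_one]
  have hT : hsNorm T = √(∑ p : Fin d × Fin d, ‖T (single p.1 p.2 1)‖ ^ 2) := by
    simp only [hsNorm, ← frobNorm_sq, frobNorm_eq_norm, Fintype.sum_prod_type]
  have hX : frobNorm X = √(∑ p : Fin d × Fin d, |X p.1 p.2| ^ 2) := by
    simp only [frobNorm, frobInner, Fintype.sum_prod_type, sq_abs, ← sq]
  rw [frobNorm_eq_norm, hTX, hT, hX, mul_comm]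
  calc ‖∑ p : Fin d × Fin d, X p.1 p.2 • T (single p.1 p.2 1)‖
      ≤ ∑ p : Fin d × Fin d, |X p.1 p.2| * ‖T (single p.1 p.2 1)‖ := by
        refine (norm_sum_le _ _).trans (le_of_eq (sum_congr rfl fun p _ => ?_))
        rw [norm_smul, Real.norm_eq_abs]
    _ ≤ _ := Real.sum_mul_le_sqrt_mul_sqrt _ _ _

lemma frobNorm_sub_apply_le_hsNorm_mul
    {P P' : Matrix (Fin d) (Fin d) ℝ →ₗ[ℝ] Matrix (Fin d) (Fin d) ℝ}
    {M : Matrix (Fin d) (Fin d) ℝ} (hM : P' M = M) :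
    frobNorm (M - P M) ≤ hsNorm (P - P') * frobNorm M := by
  simpa [hM, frobNorm_eq_norm, norm_sub_rev] using frobNorm_apply_le_hsNorm_mul (P - P') M

lemma IsOrthProjOn.frobNorm_apply_le {V : Submodule ℝ (Matrix (Fin d) (Fin d) ℝ)}
    {P : Matrix (Fin d) (Fin d) ℝ →ₗ[ℝ] Matrix (Fin d) (Fin d) ℝ} (hP : IsOrthProjOn V P)
    (X : Matrix (Fin d) (Fin d) ℝ) : frobNorm (P X) ≤ frobNorm X := by
  have hperp : frobInner (P X) (X - P X) = 0 := by
    rw [hP.2.2, map_sub, hP.2.1 _ (hP.1 X), sub_self]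
    simp [frobInner]
  have h := frobNorm_add_sq (P X) (X - P X)
  rw [add_sub_cancel, hperp] at h
  rw [← pow_le_pow_iff_left₀ (frobNorm_nonneg _) (frobNorm_nonneg _) two_ne_zero]
  nlinarith [sq_nonneg (frobNorm (X - P X))]

end Projections

section Orthonormal

variable {ι : Type*} [Fintype ι] [DecidableEq ι] {u : ι → ι → ℝ}

lemma sum_dotProduct_smul_of_orthonormal
    (horth : ∀ i j, u i ⬝ᵥ u j = if i = j then 1 else 0) (x : ι → ℝ) :
    ∑ i, (u i ⬝ᵥ x) • u i = x := by
  have hU : of u * (of u)ᵀ = 1 := by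
    ext i j
    simpa [mul_apply, one_apply, dotProduct] using horth i j
  calc ∑ i, (u i ⬝ᵥ x) • u i = x ᵥ* (of u)ᵀ ᵥ* of u := by
        rw [vecMul_transpose, vecMul_eq_sum]; rfl
    _ = x := by rw [vecMul_vecMul, mul_eq_one_comm.mp hU, vecMul_one]

lemma sum_sq_dotProduct_of_orthonormal
    (horth : ∀ i j, u i ⬝ᵥ u j = if i = j then 1 else 0) (x : ι → ℝ) :
    ∑ i, (u i ⬝ᵥ x) ^ 2 = x ⬝ᵥ x := by
  calc ∑ i, (u i ⬝ᵥ x) ^ 2 = (∑ i, (u i ⬝ᵥ x) • u i) ⬝ᵥ x := by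
        simp only [sum_dotProduct, smul_dotProduct, smul_eq_mul, sq]
    _ = x ⬝ᵥ x := by rw [sum_dotProduct_smul_of_orthonormal horth]

variable {M : Matrix ι ι ℝ} {lam : ι → ℝ}

lemma dotProduct_mulVec_of_eigen (horth : ∀ i j, u i ⬝ᵥ u j = if i = j then 1 else 0)
    (heig : ∀ i, M *ᵥ u i = lam i • u i) (i : ι) (x : ι → ℝ) :
    u i ⬝ᵥ M *ᵥ x = lam i * (u i ⬝ᵥ x) := by
  conv_lhs => rw [← sum_dotProduct_smul_of_orthonormal horth x]
  simp [mulVec_sum, mulVec_smul, heig, dotProduct_sum, horth, mul_comm]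

lemma sub_sq_mul_le_residual (horth : ∀ i j, u i ⬝ᵥ u j = if i = j then 1 else 0)
    (heig : ∀ i, M *ᵥ u i = lam i • u i) {i₀ : ι} {l μ : ℝ} (hl : ∀ i ≠ i₀, lam i ≤ l)
    (hμ : l ≤ μ) (x : ι → ℝ) :
    (μ - l) ^ 2 * (x ⬝ᵥ x - (u i₀ ⬝ᵥ x) ^ 2) ≤ (M *ᵥ x - μ • x) ⬝ᵥ (M *ᵥ x - μ • x) := by
  have hres : ∀ i, u i ⬝ᵥ (M *ᵥ x - μ • x) = (lam i - μ) * (u i ⬝ᵥ x) := fun i => by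
    rw [dotProduct_sub, dotProduct_mulVec_of_eigen horth heig, dotProduct_smul, smul_eq_mul]
    ring
  rw [← sum_sq_dotProduct_of_orthonormal horth, ← sum_sq_dotProduct_of_orthonormal horth,
    ← add_sum_erase _ _ (mem_univ i₀), ← add_sum_erase _ _ (mem_univ i₀), add_sub_cancel_left,
    mul_sum]
  simp only [hres]
  refine le_add_of_nonneg_of_le (sq_nonneg _) (sum_le_sum fun i hi => ?_)
  have hgap : (μ - l) ^ 2 ≤ (lam i - μ) ^ 2 := by
    rw [sub_sq_comm (lam i)]
    exact pow_le_pow_left₀ (sub_nonneg.mpr hμ) (sub_le_sub_left (hl i (ne_of_mem_erase hi)) μ) 2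
  rw [mul_pow]
  exact mul_le_mul_of_nonneg_right hgap (sq_nonneg _)

end Orthonormal

def rankOneSum {n ι : Type*} [Fintype ι] (w : ι → n → ℝ) (σ : ι → ℝ) : Matrix n n ℝ :=
  ∑ j, σ j • vecMulVec (w j) (w j)

section RankOneSum

variable {n ι : Type*} [Fintype ι] {w : ι → n → ℝ}

lemma rankOneSum_mulVec [Fintype n] (σ : ι → ℝ) (x : n → ℝ) :
    rankOneSum w σ *ᵥ x = ∑ j, (σ j * (w j ⬝ᵥ x)) • w j := by
  simp [rankOneSum, sum_mulVec, smul_mulVec, vecMulVec_mulVec, smul_smul]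

lemma dotProduct_rankOneSum_mulVec [Fintype n] (σ : ι → ℝ) (x : n → ℝ) :
    x ⬝ᵥ rankOneSum w σ *ᵥ x = ∑ j, σ j * (x ⬝ᵥ w j) ^ 2 := by
  rw [rankOneSum_mulVec, dotProduct_sum]
  refine sum_congr rfl fun j _ => ?_
  rw [dotProduct_smul, smul_eq_mul, dotProduct_comm (w j) x]
  ring

lemma exists_rankOneSum_eq_of_mem_span {A : Matrix n n ℝ}
    (hA : A ∈ Submodule.span ℝ (Set.range fun j => vecMulVec (w j) (w j))) :
    ∃ σ, rankOneSum w σ = A :=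
  (Submodule.mem_span_range_iff_exists_fun ℝ).mp hA

end RankOneSum

def IsUpperFrameBound {d : ℕ} {ι : Type*} [Fintype ι] (w : ι → Fin d → ℝ) (CF : ℝ) : Prop :=
  ∀ x : Fin d → ℝ, ∑ j, (x ⬝ᵥ w j) ^ 2 ≤ CF * ∑ i, x i ^ 2

section Frame

variable {d : ℕ} {ι : Type*} [Fintype ι] {w : ι → Fin d → ℝ} {CF : ℝ}

lemma IsUpperFrameBound.vnorm_sum_smul_le (hframe : IsUpperFrameBound w CF) (τ : ι → ℝ) :
    vnorm (∑ j, τ j • w j) ≤ √CF * √(∑ j, τ j ^ 2) := by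
  set y := ∑ j, τ j • w j
  have hy : vnorm y ^ 2 ≤ √CF * √(∑ j, τ j ^ 2) * vnorm y :=
    calc vnorm y ^ 2 = ∑ j, τ j * (y ⬝ᵥ w j) := by
          rw [← dotProduct_self_eq_vnorm_sq]
          simp only [y, dotProduct_sum, dotProduct_smul, smul_eq_mul]
      _ ≤ √(∑ j, τ j ^ 2) * √(∑ j, (y ⬝ᵥ w j) ^ 2) := Real.sum_mul_le_sqrt_mul_sqrt _ _ _
      _ ≤ √(∑ j, τ j ^ 2) * √(CF * vnorm y ^ 2) := by
          rw [vnorm_sq]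
          gcongr
          exact hframe y
      _ = √CF * √(∑ j, τ j ^ 2) * vnorm y := by
          rw [Real.sqrt_mul' _ (sq_nonneg _), Real.sqrt_sq (vnorm_nonneg y)]
          ring
  rcases (vnorm_nonneg y).eq_or_lt with h0 | hpos
  · rw [← h0]
    positivity
  · nlinarith

lemma IsUpperFrameBound.one_le (hframe : IsUpperFrameBound w CF) {k : ι}
    (hk : vnorm (w k) = 1) : 1 ≤ CF := by
  have h := (single_le_sum (fun j _ => sq_nonneg (w k ⬝ᵥ w j)) (mem_univ k)).trans (hframe (w k))
  rwa [← vnorm_sq, dotProduct_self_eq_vnorm_sq, hk, one_pow, one_pow, mul_one] at h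

lemma IsUpperFrameBound.sq_dotProduct_le [DecidableEq ι] (hframe : IsUpperFrameBound w CF)
    (hw : ∀ j, vnorm (w j) = 1) {j k : ι} (hjk : j ≠ k) : (w j ⬝ᵥ w k) ^ 2 ≤ CF - 1 := by
  have h := (sum_le_sum_of_subset_of_nonneg (subset_univ {k, j})
    fun i _ _ => sq_nonneg (w k ⬝ᵥ w i)).trans (hframe (w k))
  rw [sum_pair hjk.symm, ← vnorm_sq, dotProduct_self_eq_vnorm_sq, hw, dotProduct_comm] at h
  linarith

lemma rankOneSum_mulVec_sub_smul [DecidableEq ι] (hw : ∀ j, vnorm (w j) = 1) (σ : ι → ℝ)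
    (k : ι) : rankOneSum w σ *ᵥ w k - σ k • w k =
      ∑ j, (if j = k then 0 else σ j * (w j ⬝ᵥ w k)) • w j := by
  rw [rankOneSum_mulVec, ← add_sum_erase _ _ (mem_univ k), ← add_sum_erase _ _ (mem_univ k),
    dotProduct_self_eq_vnorm_sq, hw, if_pos rfl, zero_smul, zero_add, one_pow, mul_one,
    add_sub_cancel_left]
  exact sum_congr rfl fun j hj => by rw [if_neg (ne_of_mem_erase hj)]

lemma vnorm_rankOneSum_mulVec_sub_smul_le [DecidableEq ι] (hframe : IsUpperFrameBound w CF)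
    (hw : ∀ j, vnorm (w j) = 1) (σ : ι → ℝ) (k : ι) :
    vnorm (rankOneSum w σ *ᵥ w k - σ k • w k) ≤ √CF * √((CF - 1) * ∑ j, σ j ^ 2) := by
  rw [rankOneSum_mulVec_sub_smul hw]
  refine (IsUpperFrameBound.vnorm_sum_smul_le hframe _).trans ?_
  gcongr
  rw [mul_sum]
  refine sum_le_sum fun j _ => ?_
  split_ifs with hj
  · have := IsUpperFrameBound.one_le hframe (hw k)
    rw [zero_pow two_ne_zero]
    exact mul_nonneg (by linarith) (sq_nonneg _)
  · rw [mul_pow, mul_comm]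
    exact mul_le_mul_of_nonneg_right (IsUpperFrameBound.sq_dotProduct_le hframe hw hj) (sq_nonneg _)

lemma vnorm_mulVec_sub_smul_le [DecidableEq ι] (hframe : IsUpperFrameBound w CF)
    (hw : ∀ j, vnorm (w j) = 1) {M : Matrix (Fin d) (Fin d) ℝ} {σ : ι → ℝ} {δ : ℝ}
    (hMA : frobNorm (M - rankOneSum w σ) ≤ δ) (k : ι) :
    vnorm (M *ᵥ w k - σ k • w k) ≤ δ + √CF * √((CF - 1) * ∑ j, σ j ^ 2) := by
  have hsplit : M *ᵥ w k - σ k • w k =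
      (M - rankOneSum w σ) *ᵥ w k + (rankOneSum w σ *ᵥ w k - σ k • w k) := by
    rw [sub_mulVec]
    abel
  rw [hsplit]
  refine (vnorm_add_le _ _).trans (add_le_add ?_
    (vnorm_rankOneSum_mulVec_sub_smul_le hframe hw σ k))
  simpa [hw] using
    (vnorm_mulVec_le _ (w k)).trans (mul_le_mul_of_nonneg_right hMA (vnorm_nonneg _))

lemma dotProduct_rankOneSum_mulVec_le (hframe : IsUpperFrameBound w CF)
    {σ : ι → ℝ} {a : ℝ} (ha : 0 ≤ a) (hσ : ∀ j, σ j ≤ a) {x : Fin d → ℝ} (hx : vnorm x = 1) :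
    x ⬝ᵥ rankOneSum w σ *ᵥ x ≤ a * CF := by
  rw [dotProduct_rankOneSum_mulVec]
  calc ∑ j, σ j * (x ⬝ᵥ w j) ^ 2 ≤ ∑ j, a * (x ⬝ᵥ w j) ^ 2 :=
        sum_le_sum fun j _ => mul_le_mul_of_nonneg_right (hσ j) (sq_nonneg _)
    _ = a * ∑ j, (x ⬝ᵥ w j) ^ 2 := (mul_sum _ _ _).symm
    _ ≤ a * CF := by
        gcongr
        simpa [← vnorm_sq, hx] using hframe x

lemma rayleigh_le_max_coeff_mul_add (hframe : IsUpperFrameBound w CF)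
    {M : Matrix (Fin d) (Fin d) ℝ} {σ : ι → ℝ} {δ : ℝ}
    (hMA : frobNorm (M - rankOneSum w σ) ≤ δ) {k : ι} (hk : ∀ j, σ j ≤ σ k)
    {x : Fin d → ℝ} (hx : vnorm x = 1) (hδ : δ < x ⬝ᵥ M *ᵥ x) :
    x ⬝ᵥ M *ᵥ x ≤ σ k * CF + δ := by
  have hclose : x ⬝ᵥ M *ᵥ x ≤ x ⬝ᵥ rankOneSum w σ *ᵥ x + δ := by
    have h := (le_abs_self _).trans (abs_dotProduct_mulVec_le (M - rankOneSum w σ) x)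
    rw [sub_mulVec, dotProduct_sub, hx, one_pow, mul_one] at h
    linarith
  have hpos : 0 < σ k := by
    by_contra! hk0
    have := dotProduct_rankOneSum_mulVec_le hframe le_rfl (fun j => (hk j).trans hk0) hx
    linarith
  linarith [dotProduct_rankOneSum_mulVec_le hframe hpos.le hk hx]

lemma exists_rankOneSum_approx {V : Submodule ℝ (Matrix (Fin d) (Fin d) ℝ)}
    {P P' : Matrix (Fin d) (Fin d) ℝ →ₗ[ℝ] Matrix (Fin d) (Fin d) ℝ}
    (hP : IsOrthProjOn (Submodule.span ℝ (Set.range fun j => vecMulVec (w j) (w j))) P)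
    (hP' : IsOrthProjOn V P') {cr : ℝ}
    (hriesz : ∀ σ : ι → ℝ, cr * ∑ j, σ j ^ 2 ≤ frobNorm (rankOneSum w σ) ^ 2)
    {M : Matrix (Fin d) (Fin d) ℝ} (hM : M ∈ V) :
    ∃ σ, frobNorm (M - rankOneSum w σ) ≤ hsNorm (P - P') * frobNorm M ∧
      cr * ∑ j, σ j ^ 2 ≤ frobNorm M ^ 2 := by
  obtain ⟨σ, hσ⟩ := exists_rankOneSum_eq_of_mem_span (hP.1 M)
  refine ⟨σ, hσ ▸ frobNorm_sub_apply_le_hsNorm_mul (hP'.2.1 M hM), (hriesz σ).trans ?_⟩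
  rw [hσ]
  exact pow_le_pow_left₀ (frobNorm_nonneg _) (hP.frobNorm_apply_le M) 2

end Frame

lemma sqrt_two_sub_two_abs_le_of_gap {lam₁ lam₂ a δ t ν ρ c : ℝ} (hδ : 0 ≤ δ) (ht : 0 ≤ t)
    (hν : 0 ≤ ν) (hgap : lam₂ < lam₁) (ha : lam₁ - δ - t / 2 ≤ a) (hρ : 0 ≤ ρ)
    (hρle : ρ ≤ δ + 9 / 8 * t) (hDK : lam₂ ≤ a → (a - lam₂) ^ 2 * (1 - c ^ 2) ≤ ρ ^ 2)
    (hc : |c| ≤ 1) :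
    √(2 - 2 * |c|) ≤ √8 * (t + ν + 2 * δ) / (lam₁ - lam₂) := by
  set G := lam₁ - lam₂
  set B := t + ν + 2 * δ
  have hG : 0 < G := sub_pos.mpr hgap
  have hc2 : c ^ 2 ≤ |c| := by nlinarith [abs_nonneg c, sq_abs c]
  have hbound : (2 - 2 * |c|) * G ^ 2 ≤ 8 * B ^ 2 := by
    rcases le_or_gt G (2 * B) with hsmall | hlarge
    · nlinarith [abs_nonneg c]
    · -- a large gap keeps `a` at distance `≥ 3G/4` from `lam₂`
      have h1 : (3 / 4 * G) ^ 2 * (1 - c ^ 2) ≤ (3 / 2 * B) ^ 2 :=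
        calc (3 / 4 * G) ^ 2 * (1 - c ^ 2) ≤ (a - lam₂) ^ 2 * (1 - c ^ 2) := by
              gcongr
              · nlinarith
              · linarith
          _ ≤ ρ ^ 2 := hDK (by linarith)
          _ ≤ (3 / 2 * B) ^ 2 := by gcongr; linarith
      nlinarith
  rw [Real.sqrt_le_left (by positivity), div_pow, mul_pow, Real.sq_sqrt (by norm_num),
    le_div_iff₀ (by positivity)]
  exact hbound

lemma sqrt_two_sub_two_abs_le_of_coeff_bounds {lam₁ lam₂ a δ ν cr S ρ c : ℝ} (hδ : 0 ≤ δ)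
    (hν : 0 ≤ ν) (hν4 : ν ≤ 1 / 4) (hgap : lam₂ < lam₁) (ha : a ^ 2 ≤ S) (hcr : 0 < cr)
    (hS : cr * S ≤ 1) (hlam : lam₁ ≤ a * (ν + 1) + δ) (hρ : 0 ≤ ρ)
    (hρle : ρ ≤ δ + √(ν + 1) * √(ν * S))
    (hDK : lam₂ ≤ a → (a - lam₂) ^ 2 * (1 - c ^ 2) ≤ ρ ^ 2) (hc : |c| ≤ 1) :
    √(2 - 2 * |c|) ≤ √8 * ((√cr)⁻¹ * √ν + ν + 2 * δ) / (lam₁ - lam₂) := by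
  set t := (√cr)⁻¹ * √ν
  have ht : 0 ≤ t := by positivity
  have hνS : √ν * √S ≤ t :=
    calc √ν * √S ≤ √ν * √cr⁻¹ := by
          gcongr
          rwa [← one_div, le_div_iff₀ hcr, mul_comm]
      _ = t := by rw [Real.sqrt_inv, mul_comm]
  have hsqrtν : √ν ≤ 1 / 2 := (Real.sqrt_le_left (by norm_num)).mpr (by linarith)
  have haν : a * ν ≤ t / 2 :=
    calc a * ν ≤ √S * ν :=
          mul_le_mul_of_nonneg_right ((le_abs_self a).trans (Real.abs_le_sqrt ha)) hν
      _ = √ν * √S * √ν := by linear_combination (-√S) * Real.mul_self_sqrt hν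
      _ ≤ t * (1 / 2) := mul_le_mul hνS hsqrtν (Real.sqrt_nonneg _) ht
      _ = t / 2 := by ring
  have hCF : √(ν + 1) ≤ 9 / 8 := (Real.sqrt_le_left (by norm_num)).mpr (by linarith)
  refine sqrt_two_sub_two_abs_le_of_gap hδ ht hν hgap (by linarith) hρ ?_ hDK hc
  rw [Real.sqrt_mul hν] at hρle
  nlinarith [Real.sqrt_nonneg (ν + 1), mul_nonneg (Real.sqrt_nonneg ν) (Real.sqrt_nonneg S)]

/-- recovery of a network profile from the top eigenvector of a nearly
rank-one matrix in `Wh ∩ S`. -/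
theorem largest_eigenvector_recovery
    (d m : ℕ) (hd : 2 ≤ d) (hm : 0 < m)
    (w : Fin m → Fin d → ℝ) (hw : ∀ j, vnorm (w j) = 1)
    (Wh : Submodule ℝ (Matrix (Fin d) (Fin d) ℝ))
    (PW PWh : Matrix (Fin d) (Fin d) ℝ →ₗ[ℝ] Matrix (Fin d) (Fin d) ℝ)
    (hPW : IsOrthProjOn (Submodule.span ℝ (Set.range fun j => vecMulVec (w j) (w j))) PW)
    (hPWh : IsOrthProjOn Wh PWh)
    (δ : ℝ) (hδ : δ = hsNorm (PW - PWh))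
    (CF ν : ℝ)
    (hframe : ∀ x : Fin d → ℝ, ∑ j, (dotProduct x (w j)) ^ 2 ≤ CF * ∑ i, x i ^ 2)
    (hν : ν = CF - 1)
    (cr : ℝ) (hcr : 0 < cr)
    (hriesz : ∀ σ : Fin m → ℝ,
      cr * ∑ j, σ j ^ 2 ≤ frobNorm (∑ j, σ j • vecMulVec (w j) (w j)) ^ 2)
    (M : Matrix (Fin d) (Fin d) ℝ) (hM : M ∈ Wh) (hMS : frobNorm M = 1)
    (lam : Fin d → ℝ) (u : Fin d → Fin d → ℝ)
    (hmono : ∀ i j : Fin d, i ≤ j → lam j ≤ lam i)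
    (horth : ∀ i j : Fin d, dotProduct (u i) (u j) = if i = j then 1 else 0)
    (heig : ∀ i, M.mulVec (u i) = lam i • u i)
    (hδν : max δ ν ≤ 1 / 4)
    (hgap : lam ⟨0, by omega⟩ > max (2 * δ) (lam ⟨1, by omega⟩)) :
    ∃ (j : Fin m) (s : ℝ), (s = 1 ∨ s = -1) ∧
      vnorm (s • w j - u ⟨0, by omega⟩) ≤
        Real.sqrt 8 * ((Real.sqrt cr)⁻¹ * Real.sqrt ν + ν + 2 * δ) /
          (lam ⟨0, by omega⟩ - lam ⟨1, by omega⟩) := by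
  set i₀ : Fin d := ⟨0, by omega⟩
  set i₁ : Fin d := ⟨1, by omega⟩
  have hδ0 : 0 ≤ δ := by rw [hδ]; exact Real.sqrt_nonneg _
  have hu : vnorm (u i₀) = 1 := (pow_eq_one_iff_of_nonneg (vnorm_nonneg _) two_ne_zero).mp
    (by rw [← dotProduct_self_eq_vnorm_sq, horth, if_pos rfl])
  obtain ⟨σ, hMA, hσsq⟩ := exists_rankOneSum_approx hPW hPWh hriesz hM
  rw [hMS, mul_one, ← hδ] at hMA
  rw [hMS, one_pow] at hσsq
  obtain ⟨k, -, hk⟩ := exists_max_image univ σ ⟨⟨0, hm⟩, mem_univ _⟩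
  have hray : u i₀ ⬝ᵥ M *ᵥ u i₀ = lam i₀ := by
    rw [heig, dotProduct_smul, horth, if_pos rfl, smul_eq_mul, mul_one]
  have hlam := rayleigh_le_max_coeff_mul_add hframe hMA (fun j => hk j (mem_univ j)) hu
    (by rw [hray]; linarith [le_max_left (2 * δ) (lam i₁)])
  have hres := vnorm_mulVec_sub_smul_le hframe hw hMA k
  have hDK (hσk : lam i₁ ≤ σ k) := sub_sq_mul_le_residual horth heig (i₀ := i₀)
    (fun i hi => hmono _ _ (Fin.le_def.mpr (Nat.one_le_iff_ne_zero.mpr (Fin.val_ne_iff.mpr hi))))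
    hσk (w k)
  simp only [dotProduct_self_eq_vnorm_sq, hw, one_pow, dotProduct_comm (u i₀)] at hDK
  obtain ⟨s, hs, hdist⟩ := exists_sign_vnorm_smul_sub_eq (hw k) hu
  refine ⟨k, s, hs, hdist ▸ ?_⟩
  obtain rfl : CF = ν + 1 := by linarith
  rw [hray] at hlam
  rw [add_sub_cancel_right] at hres
  exact sqrt_two_sub_two_abs_le_of_coeff_bounds hδ0
    (by linarith [IsUpperFrameBound.one_le hframe (hw k)]) ((le_max_right _ _).trans hδν)
    ((le_max_right _ _).trans_lt hgap) (single_le_sum (fun j _ => sq_nonneg (σ j)) (mem_univ k))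
    hcr hσsq hlam (vnorm_nonneg _) hres hDK
    (by simpa [hw, hu] using abs_dotProduct_le (w k) (u i₀))
end

section
/- Let γ > 0 and ε > 0, and set M_ε := {M ∈ Ŵ ∩ S : λ_1(M) ≥ √(1/2 + ε)}. Then: (i) F_γ(X) ∈ M_ε for all X ∈ M_ε; (ii) F_γ is Lipschitz continuous on M_ε with respect to ‖·‖_F with Lipschitz constant 1 + γ/ε, i.e. ‖F_γ(X) − F_γ(Y)‖_F ≤ (1 + γ/ε)·‖X − Y‖_F for all X, Y ∈ M_ε. -/
open Matrix

/-!
Write `U = u ⊗ u` for the top unit eigenvector `u` of `X` and `G = P(X + γU) = X + γ P U`.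
Since `⟪X, P U⟫ = λ₁(X) ≥ 0` we have `‖G‖ ≥ 1`, and `λ₁(X)² ≥ 1/2 + ε` together with
`‖P U‖ ≥ ⟪X, P U⟫ = λ₁(X)` gives `⟪G, U⟫ ≥ √(1/2 + ε) ‖G‖`; this Rayleigh quotient bounds
`λ₁(F X)` from below.

Normalization is `1`-Lipschitz outside the unit ball and `P` is nonexpansive, so
`‖F X - F Y‖ ≤ ‖X - Y‖ + γ ‖U - V‖`. A Frobenius-unit symmetric matrix with top eigenvalue `s`
satisfies `vᵀXv ≤ s c² + √(1 - s²)(1 - c²)` for unit `v` with `c = ⟨u, v⟩`, and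
`s - √(1 - s²) ≥ ε` on `M_ε`; hence `ε ‖U - V‖² ≤ ⟪X - Y, U - V⟫` and `‖U - V‖ ≤ ‖X - Y‖ / ε`.
-/

open scoped InnerProductSpace

section InnerProductSpace

variable {E : Type*} [NormedAddCommGroup E] [InnerProductSpace ℝ E]

theorem norm_inv_smul_sub_inv_smul_le {a b : E} (ha : 1 ≤ ‖a‖) (hb : 1 ≤ ‖b‖) :
    ‖‖a‖⁻¹ • a - ‖b‖⁻¹ • b‖ ≤ ‖a - b‖ := by
  have ha0 : ‖a‖ ≠ 0 := (one_pos.trans_le ha).ne'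
  have hb0 : ‖b‖ ≠ 0 := (one_pos.trans_le hb).ne'
  have hp : 1 ≤ ‖a‖ * ‖b‖ := one_le_mul_of_one_le_of_one_le ha hb
  set q := ⟪a, b⟫_ℝ / (‖a‖ * ‖b‖)
  have hq : q ≤ 1 := div_le_one_of_le₀ (real_inner_le_norm a b) (by positivity)
  have hqp : ⟪a, b⟫_ℝ = q * (‖a‖ * ‖b‖) := (div_mul_cancel₀ _ (by positivity)).symm
  have hsq : ‖‖a‖⁻¹ • a - ‖b‖⁻¹ • b‖ ^ 2 = 2 - 2 * q := by
    rw [norm_sub_sq_real, norm_smul, norm_smul, real_inner_smul_left, real_inner_smul_right]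
    simp only [norm_inv, norm_norm, inv_mul_cancel₀ ha0, inv_mul_cancel₀ hb0, q]
    field_simp
    ring
  refine (pow_le_pow_iff_left₀ (norm_nonneg _) (norm_nonneg _) two_ne_zero).1 ?_
  rw [hsq, norm_sub_sq_real, hqp]
  nlinarith [mul_nonneg (sub_nonneg.2 hq) (sub_nonneg.2 hp), sq_nonneg (‖a‖ - ‖b‖)]

theorem norm_le_div_of_mul_norm_sq_le_inner {a b : E} {ε : ℝ} (hε : 0 < ε)
    (h : ε * ‖b‖ ^ 2 ≤ ⟪a, b⟫_ℝ) : ‖b‖ ≤ ‖a‖ / ε := by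
  rw [le_div_iff₀ hε]
  rcases (norm_nonneg b).eq_or_lt with hb | hb
  · rw [← hb, zero_mul]; exact norm_nonneg a
  · nlinarith [real_inner_le_norm a b]

namespace Submodule

variable (K : Submodule ℝ E) [K.HasOrthogonalProjection]

theorem inner_starProjection_self (u : E) :
    ⟪K.starProjection u, u⟫_ℝ = ‖K.starProjection u‖ ^ 2 := by
  have hidem : K.starProjection (K.starProjection u) = K.starProjection u :=
    K.starProjection_eq_self_iff.2 (K.starProjection_apply_mem u)
  rw [← real_inner_self_eq_norm_sq, ← inner_starProjection_left_eq_right, hidem]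

theorem inner_starProjection_right_of_mem {x : E} (hx : x ∈ K) (u : E) :
    ⟪x, K.starProjection u⟫_ℝ = ⟪x, u⟫_ℝ := by
  rw [← inner_starProjection_left_eq_right, K.starProjection_eq_self_iff.2 hx]

theorem starProjection_add_smul_of_mem {x : E} (hx : x ∈ K) (γ : ℝ) (u : E) :
    K.starProjection (x + γ • u) = x + γ • K.starProjection u := by
  rw [map_add, map_smul, K.starProjection_eq_self_iff.2 hx]

theorem norm_starProjection_add_smul_sq {x : E} (hx : x ∈ K) (γ : ℝ) (u : E) :
    ‖K.starProjection (x + γ • u)‖ ^ 2 =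
      ‖x‖ ^ 2 + 2 * γ * ⟪x, u⟫_ℝ + γ ^ 2 * ‖K.starProjection u‖ ^ 2 := by
  rw [K.starProjection_add_smul_of_mem hx, norm_add_sq_real, real_inner_smul_right,
    K.inner_starProjection_right_of_mem hx, norm_smul, mul_pow, Real.norm_eq_abs, sq_abs]
  ring

theorem inner_starProjection_add_smul {x : E} (hx : x ∈ K) (γ : ℝ) (u : E) :
    ⟪K.starProjection (x + γ • u), u⟫_ℝ = ⟪x, u⟫_ℝ + γ * ‖K.starProjection u‖ ^ 2 := by
  rw [K.starProjection_add_smul_of_mem hx, inner_add_left, real_inner_smul_left,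
    inner_starProjection_self]

variable {K}

theorem one_le_norm_starProjection_add_smul {x u : E} {γ : ℝ} (hx : x ∈ K) (hx1 : ‖x‖ = 1)
    (hxu : 0 ≤ ⟪x, u⟫_ℝ) (hγ : 0 ≤ γ) : 1 ≤ ‖K.starProjection (x + γ • u)‖ := by
  refine (one_le_sq_iff₀ (norm_nonneg _)).1 ?_
  rw [K.norm_starProjection_add_smul_sq hx, hx1]
  nlinarith [mul_nonneg hγ hxu, mul_nonneg (sq_nonneg γ) (sq_nonneg ‖K.starProjection u‖)]

variable (K) in
/-- `F_γ(x)`, with `u` in the role of `u₁(x) ⊗ u₁(x)`. -/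
noncomputable def normalizedShiftedProjection (γ : ℝ) (x u : E) : E :=
  ‖K.starProjection (x + γ • u)‖⁻¹ • K.starProjection (x + γ • u)

theorem normalizedShiftedProjection_mem (γ : ℝ) (x u : E) :
    K.normalizedShiftedProjection γ x u ∈ K :=
  K.smul_mem _ (K.starProjection_apply_mem _)

theorem norm_normalizedShiftedProjection {x u : E} {γ : ℝ} (hx : x ∈ K) (hx1 : ‖x‖ = 1)
    (hxu : 0 ≤ ⟪x, u⟫_ℝ) (hγ : 0 ≤ γ) : ‖K.normalizedShiftedProjection γ x u‖ = 1 := by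
  have h := one_le_norm_starProjection_add_smul hx hx1 hxu hγ
  rw [normalizedShiftedProjection, norm_smul, norm_inv, norm_norm,
    inv_mul_cancel₀ (one_pos.trans_le h).ne']

theorem le_inner_normalizedShiftedProjection {x u : E} {γ t : ℝ} (hx : x ∈ K) (hx1 : ‖x‖ = 1)
    (ht : 0 ≤ t) (htu : t ≤ ⟪x, u⟫_ℝ) (hγ : 0 ≤ γ) :
    t ≤ ⟪K.normalizedShiftedProjection γ x u, u⟫_ℝ := by
  have hG := one_le_norm_starProjection_add_smul hx hx1 (ht.trans htu) hγ
  have hsn : ⟪x, u⟫_ℝ ≤ ‖K.starProjection u‖ := by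
    simpa [hx1, K.inner_starProjection_right_of_mem hx] using
      real_inner_le_norm x (K.starProjection u)
  rw [normalizedShiftedProjection, real_inner_smul_left, K.inner_starProjection_add_smul hx,
    ← div_eq_inv_mul, le_div_iff₀ (one_pos.trans_le hG)]
  refine (pow_le_pow_iff_left₀ (by positivity) (by nlinarith) two_ne_zero).1 ?_
  rw [mul_pow, K.norm_starProjection_add_smul_sq hx, hx1]
  set s := ⟪x, u⟫_ℝ
  set n := ‖K.starProjection u‖
  have hts : t ^ 2 ≤ s ^ 2 := pow_le_pow_left₀ ht htu 2
  have htn : t ^ 2 ≤ n ^ 2 := hts.trans (pow_le_pow_left₀ (ht.trans htu) hsn 2)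
  have hs : 0 ≤ s := ht.trans htu
  nlinarith [mul_le_mul_of_nonneg_left htn (mul_nonneg hγ hs),
    mul_le_mul_of_nonneg_left htn (mul_nonneg (sq_nonneg γ) (sq_nonneg n))]

theorem norm_normalizedShiftedProjection_sub_le {x y u v : E} {γ : ℝ} (hx : x ∈ K)
    (hx1 : ‖x‖ = 1) (hxu : 0 ≤ ⟪x, u⟫_ℝ) (hy : y ∈ K) (hy1 : ‖y‖ = 1) (hyv : 0 ≤ ⟪y, v⟫_ℝ)
    (hγ : 0 ≤ γ) :
    ‖K.normalizedShiftedProjection γ x u - K.normalizedShiftedProjection γ y v‖ ≤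
      ‖x - y‖ + γ * ‖u - v‖ :=
  calc _ ≤ ‖K.starProjection (x + γ • u) - K.starProjection (y + γ • v)‖ :=
        norm_inv_smul_sub_inv_smul_le (one_le_norm_starProjection_add_smul hx hx1 hxu hγ)
          (one_le_norm_starProjection_add_smul hy hy1 hyv hγ)
    _ = ‖K.starProjection ((x - y) + γ • (u - v))‖ := by
        rw [← map_sub, add_sub_add_comm, smul_sub]
    _ ≤ ‖(x - y) + γ • (u - v)‖ := K.norm_starProjection_apply_le _
    _ ≤ ‖x - y‖ + γ * ‖u - v‖ := by
        grw [norm_add_le, norm_smul, Real.norm_of_nonneg hγ]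

end Submodule

end InnerProductSpace

section Frobenius

variable {d : ℕ}

theorem frobInner_comm (M N : Matrix (Fin d) (Fin d) ℝ) : frobInner M N = frobInner N M := by
  simp only [frobInner, mul_comm]

theorem eq_zero_of_frobInner_self_eq_zero {M : Matrix (Fin d) (Fin d) ℝ}
    (h : frobInner M M = 0) : M = 0 := by
  ext i j
  have hrow := (Finset.sum_eq_zero_iff_of_nonneg fun i _ =>
    Finset.sum_nonneg fun j _ => mul_self_nonneg (M i j)).1 h i (Finset.mem_univ i)
  exact mul_self_eq_zero.1 ((Finset.sum_eq_zero_iff_of_nonneg fun j _ =>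
    mul_self_nonneg (M i j)).1 hrow j (Finset.mem_univ j))

@[reducible]
noncomputable def frobInnerCore : InnerProductSpace.Core ℝ (Matrix (Fin d) (Fin d) ℝ) where
  inner := frobInner
  conj_inner_symm M N := frobInner_comm N M
  re_inner_nonneg M := by
    rw [RCLike.re_to_real]
    exact Finset.sum_nonneg fun i _ => Finset.sum_nonneg fun j _ => mul_self_nonneg (M i j)
  add_left M N L := by simp only [frobInner, Matrix.add_apply, add_mul, Finset.sum_add_distrib]
  smul_left M N r := by simp [frobInner, Finset.mul_sum, mul_assoc]
  definite _ := eq_zero_of_frobInner_self_eq_zero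

@[reducible]
noncomputable def frobNormedAddCommGroup : NormedAddCommGroup (Matrix (Fin d) (Fin d) ℝ) :=
  @InnerProductSpace.Core.toNormedAddCommGroup ℝ _ _ _ _ frobInnerCore

attribute [local instance] frobNormedAddCommGroup

@[reducible]
noncomputable def frobInnerProductSpace : InnerProductSpace ℝ (Matrix (Fin d) (Fin d) ℝ) :=
  InnerProductSpace.ofCore frobInnerCore.toCore

end Frobenius

/- Under these instances `⟪M, N⟫_ℝ` and `‖M‖` are definitionally `frobInner M N` and
`frobNorm M`. -/
attribute [local instance] frobNormedAddCommGroup frobInnerProductSpace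

theorem IsOrthProjOn.apply_eq_starProjection {d : ℕ}
    {V : Submodule ℝ (Matrix (Fin d) (Fin d) ℝ)}
    {P : Matrix (Fin d) (Fin d) ℝ →ₗ[ℝ] Matrix (Fin d) (Fin d) ℝ} (hP : IsOrthProjOn V P)
    (X : Matrix (Fin d) (Fin d) ℝ) : P X = V.starProjection X := by
  obtain ⟨hmem, hfix, hsymm⟩ := hP
  refine (V.eq_starProjection_of_mem_of_inner_eq_zero (hmem X) fun W hW => ?_).symm
  have hPXW : ⟪P X, W⟫_ℝ = ⟪X, W⟫_ℝ := (hsymm X W).trans (by rw [hfix W hW]; rfl)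
  rw [inner_sub_left, hPXW, sub_self]

section RankOne

variable {d : ℕ}

theorem dotProduct_self_eq_sum_sq (v : Fin d → ℝ) : v ⬝ᵥ v = ∑ i, v i ^ 2 := by
  simp only [dotProduct, sq]

theorem inner_vecMulVec (M : Matrix (Fin d) (Fin d) ℝ) (a b : Fin d → ℝ) :
    ⟪M, vecMulVec a b⟫_ℝ = a ⬝ᵥ M *ᵥ b := by
  change frobInner _ _ = _
  simp only [frobInner, vecMulVec_apply, dotProduct, mulVec, Finset.mul_sum]
  exact Finset.sum_congr rfl fun i _ => Finset.sum_congr rfl fun j _ => by ring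

theorem inner_vecMulVec_self_vecMulVec_self (a b : Fin d → ℝ) :
    ⟪vecMulVec a a, vecMulVec b b⟫_ℝ = (a ⬝ᵥ b) ^ 2 := by
  rw [inner_vecMulVec, vecMulVec_mulVec, sq]
  simp [dotProduct_comm b a]

theorem norm_vecMulVec_self (a : Fin d → ℝ) : ‖vecMulVec a a‖ = a ⬝ᵥ a := by
  rw [norm_eq_sqrt_real_inner, inner_vecMulVec_self_vecMulVec_self, Real.sqrt_sq]
  rw [dotProduct_self_eq_sum_sq]
  positivity

theorem dotProduct_mulVec_le_lamTop (M : Matrix (Fin d) (Fin d) ℝ) {v : Fin d → ℝ}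
    (hv : v ⬝ᵥ v = 1) : v ⬝ᵥ M *ᵥ v ≤ lamTop M := by
  refine le_csSup ⟨‖M‖, ?_⟩ ⟨v, by rwa [← dotProduct_self_eq_sum_sq], rfl⟩
  rintro r ⟨w, hw, rfl⟩
  simpa [← inner_vecMulVec, norm_vecMulVec_self, dotProduct_self_eq_sum_sq, hw] using
    real_inner_le_norm M (vecMulVec w w)

theorem le_norm_of_mulVec_eq_smul {X : Matrix (Fin d) (Fin d) ℝ} {u : Fin d → ℝ} {s : ℝ}
    (hu : u ⬝ᵥ u = 1) (hXu : X *ᵥ u = s • u) : s ≤ ‖X‖ := by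
  simpa [inner_vecMulVec, hXu, hu, norm_vecMulVec_self] using
    real_inner_le_norm X (vecMulVec u u)

end RankOne

section SpectralGap

variable {d : ℕ}

theorem dotProduct_mulVec_le_of_mulVec_eq_zero {A : Matrix (Fin d) (Fin d) ℝ} (hA : A.IsSymm)
    {u : Fin d → ℝ} (hu : u ⬝ᵥ u = 1) (hAu : A *ᵥ u = 0) (v : Fin d → ℝ) :
    v ⬝ᵥ A *ᵥ v ≤ ‖A‖ * (v ⬝ᵥ v - (u ⬝ᵥ v) ^ 2) := by
  set w := v - (u ⬝ᵥ v) • u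
  have hAv : A *ᵥ v = A *ᵥ w := by simp [w, mulVec_sub, mulVec_smul, hAu]
  have huAw : u ⬝ᵥ A *ᵥ w = 0 := by
    rw [dotProduct_mulVec, ← hA.eq, vecMul_transpose, hAu, zero_dotProduct]
  have hvAv : v ⬝ᵥ A *ᵥ v = w ⬝ᵥ A *ᵥ w := by
    rw [hAv, show v = w + (u ⬝ᵥ v) • u by simp [w], add_dotProduct, smul_dotProduct, huAw,
      smul_zero, add_zero]
  have hww : w ⬝ᵥ w = v ⬝ᵥ v - (u ⬝ᵥ v) ^ 2 := by
    simp only [w, dotProduct_sub, sub_dotProduct, dotProduct_smul, smul_dotProduct, smul_eq_mul,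
      hu, dotProduct_comm v u]
    ring
  simpa [hvAv, ← inner_vecMulVec, norm_vecMulVec_self, hww] using
    real_inner_le_norm A (vecMulVec w w)

theorem dotProduct_mulVec_le_of_mulVec_eq_smul {X : Matrix (Fin d) (Fin d) ℝ} (hX : X.IsSymm)
    {u : Fin d → ℝ} (hu : u ⬝ᵥ u = 1) {s : ℝ} (hXu : X *ᵥ u = s • u) {v : Fin d → ℝ}
    (hv : v ⬝ᵥ v = 1) :
    v ⬝ᵥ X *ᵥ v ≤ s * (u ⬝ᵥ v) ^ 2 + √(‖X‖ ^ 2 - s ^ 2) * (1 - (u ⬝ᵥ v) ^ 2) := by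
  -- `A` annihilates `u` and carries the remaining Frobenius mass `‖X‖² - s²`.
  set A := X - s • vecMulVec u u
  have hU : (vecMulVec u u).IsSymm := transpose_vecMulVec u u
  have hA : A.IsSymm := hX.sub (hU.smul s)
  have hAu : A *ᵥ u = 0 := by
    simp [A, sub_mulVec, smul_mulVec, vecMulVec_mulVec, hXu, hu]
  have hXU : ⟪X, vecMulVec u u⟫_ℝ = s := by
    rw [inner_vecMulVec, hXu, dotProduct_smul, hu, smul_eq_mul, mul_one]
  have hnormA : ‖A‖ = √(‖X‖ ^ 2 - s ^ 2) := by
    rw [← Real.sqrt_sq (norm_nonneg A), norm_sub_sq_real, real_inner_smul_right, hXU, norm_smul,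
      norm_vecMulVec_self, hu, Real.norm_eq_abs, mul_one, sq_abs]
    ring_nf
  have hvAv : v ⬝ᵥ A *ᵥ v = v ⬝ᵥ X *ᵥ v - s * (u ⬝ᵥ v) ^ 2 := by
    rw [← inner_vecMulVec, ← inner_vecMulVec, inner_sub_left, real_inner_smul_left,
      inner_vecMulVec_self_vecMulVec_self]
  have h := dotProduct_mulVec_le_of_mulVec_eq_zero hA hu hAu v
  rw [hvAv, hnormA, hv] at h
  linarith

theorem le_sub_sqrt_one_sub_sq {ε s : ℝ} (hε : 0 ≤ ε) (hs : √(1 / 2 + ε) ≤ s) (hs1 : s ≤ 1) :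
    ε ≤ s - √(1 - s ^ 2) := by
  have hs0 : 0 ≤ s := (Real.sqrt_nonneg _).trans hs
  have hs2 : 1 / 2 + ε ≤ s ^ 2 := (Real.sqrt_le_left (by positivity)).1 hs
  set r := √(1 - s ^ 2)
  have hr0 : 0 ≤ r := Real.sqrt_nonneg _
  have hr2 : r ^ 2 = 1 - s ^ 2 := Real.sq_sqrt (by nlinarith)
  have hrs : r ≤ s := (pow_le_pow_iff_left₀ hr0 hs0 two_ne_zero).1 (by linarith)
  nlinarith [mul_le_mul_of_nonneg_left (show s + r ≤ 2 by nlinarith) (sub_nonneg.2 hrs)]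

end SpectralGap

section GappedEigenpair

variable {d : ℕ}

/-- The data of `X ∈ M_ε` used below, with `s = λ₁(X)` and `u = u₁(X)`. -/
structure IsGappedEigenpair (ε : ℝ) (X : Matrix (Fin d) (Fin d) ℝ) (s : ℝ) (u : Fin d → ℝ) :
    Prop where
  isSymm : X.IsSymm
  norm_eq_one : ‖X‖ = 1
  dotProduct_self : u ⬝ᵥ u = 1
  mulVec_eq : X *ᵥ u = s • u
  sqrt_le : √(1 / 2 + ε) ≤ s

namespace IsGappedEigenpair

variable {ε s t : ℝ} {X Y : Matrix (Fin d) (Fin d) ℝ} {u v : Fin d → ℝ}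

theorem inner_vecMulVec_self (h : IsGappedEigenpair ε X s u) : ⟪X, vecMulVec u u⟫_ℝ = s := by
  rw [inner_vecMulVec, h.mulVec_eq, dotProduct_smul, h.dotProduct_self, smul_eq_mul, mul_one]

theorem mul_one_sub_sq_le (h : IsGappedEigenpair ε X s u) (hε : 0 ≤ ε) (hv : v ⬝ᵥ v = 1) :
    ε * (1 - (u ⬝ᵥ v) ^ 2) ≤ s - v ⬝ᵥ X *ᵥ v := by
  have hquad := dotProduct_mulVec_le_of_mulVec_eq_smul h.isSymm h.dotProduct_self h.mulVec_eq hv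
  have hs1 : s ≤ 1 := h.norm_eq_one ▸ le_norm_of_mulVec_eq_smul h.dotProduct_self h.mulVec_eq
  have hgap := le_sub_sqrt_one_sub_sq hε h.sqrt_le hs1
  have hc : (u ⬝ᵥ v) ^ 2 ≤ 1 := by
    simpa [← inner_vecMulVec_self_vecMulVec_self, norm_vecMulVec_self, h.dotProduct_self, hv]
      using real_inner_le_norm (vecMulVec u u) (vecMulVec v v)
  rw [h.norm_eq_one, one_pow] at hquad
  nlinarith [mul_le_mul_of_nonneg_right hgap (sub_nonneg.2 hc)]

theorem mul_norm_sub_sq_le_inner (hX : IsGappedEigenpair ε X s u)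
    (hY : IsGappedEigenpair ε Y t v) (hε : 0 ≤ ε) :
    ε * ‖vecMulVec u u - vecMulVec v v‖ ^ 2 ≤ ⟪X - Y, vecMulVec u u - vecMulVec v v⟫_ℝ := by
  have hnorm : ‖vecMulVec u u - vecMulVec v v‖ ^ 2 = 2 * (1 - (u ⬝ᵥ v) ^ 2) := by
    rw [norm_sub_sq_real, norm_vecMulVec_self, norm_vecMulVec_self,
      inner_vecMulVec_self_vecMulVec_self, hX.dotProduct_self, hY.dotProduct_self]
    ring
  have hinner : ⟪X - Y, vecMulVec u u - vecMulVec v v⟫_ℝ =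
      (s - v ⬝ᵥ X *ᵥ v) + (t - u ⬝ᵥ Y *ᵥ u) := by
    rw [inner_sub_left, inner_sub_right, inner_sub_right, hX.inner_vecMulVec_self,
      hY.inner_vecMulVec_self, inner_vecMulVec, inner_vecMulVec]
    ring
  have hXv := hX.mul_one_sub_sq_le hε hY.dotProduct_self
  have hYu := hY.mul_one_sub_sq_le hε hX.dotProduct_self
  rw [dotProduct_comm v u] at hYu
  rw [hnorm, hinner]
  linarith

end IsGappedEigenpair

end GappedEigenpair

/-- `F_γ` maps `M_ε` into itself and is Lipschitz continuous there with
constant `1 + γ/ε`. -/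
theorem Fgamma_invariance_and_lipschitz
    (d : ℕ) (γ ε : ℝ) (hγ : 0 < γ) (hε : 0 < ε)
    (Wh : Submodule ℝ (Matrix (Fin d) (Fin d) ℝ))
    (hWhsym : ∀ X ∈ Wh, X.IsSymm)
    (PWh : Matrix (Fin d) (Fin d) ℝ →ₗ[ℝ] Matrix (Fin d) (Fin d) ℝ)
    (hPWh : IsOrthProjOn Wh PWh)
    (X Y : Matrix (Fin d) (Fin d) ℝ)
    (hX : X ∈ Wh) (hXS : frobNorm X = 1) (hXlam : Real.sqrt (1 / 2 + ε) ≤ lamTop X)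
    (hY : Y ∈ Wh) (hYS : frobNorm Y = 1) (hYlam : Real.sqrt (1 / 2 + ε) ≤ lamTop Y)
    (ux uy : Fin d → ℝ)
    (hux : ∑ i, ux i ^ 2 = 1) (heigx : X.mulVec ux = lamTop X • ux)
    (huy : ∑ i, uy i ^ 2 = 1) (heigy : Y.mulVec uy = lamTop Y • uy)
    (FX FY : Matrix (Fin d) (Fin d) ℝ)
    (hFX : FX = (frobNorm (PWh (X + γ • vecMulVec ux ux)))⁻¹ •
      PWh (X + γ • vecMulVec ux ux))
    (hFY : FY = (frobNorm (PWh (Y + γ • vecMulVec uy uy)))⁻¹ •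
      PWh (Y + γ • vecMulVec uy uy)) :
    (FX ∈ Wh ∧ frobNorm FX = 1 ∧ Real.sqrt (1 / 2 + ε) ≤ lamTop FX) ∧
      frobNorm (FX - FY) ≤ (1 + γ / ε) * frobNorm (X - Y) := by
  have hpX : IsGappedEigenpair ε X (lamTop X) ux :=
    ⟨hWhsym X hX, hXS, (dotProduct_self_eq_sum_sq ux).trans hux, heigx, hXlam⟩
  have hpY : IsGappedEigenpair ε Y (lamTop Y) uy :=
    ⟨hWhsym Y hY, hYS, (dotProduct_self_eq_sum_sq uy).trans huy, heigy, hYlam⟩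
  have hF (Z U : Matrix (Fin d) (Fin d) ℝ) : (frobNorm (PWh (Z + γ • U)))⁻¹ • PWh (Z + γ • U) =
      Wh.normalizedShiftedProjection γ Z U := by
    rw [hPWh.apply_eq_starProjection]; rfl
  have hXU : √(1 / 2 + ε) ≤ ⟪X, vecMulVec ux ux⟫_ℝ := hpX.inner_vecMulVec_self ▸ hXlam
  have hYV : √(1 / 2 + ε) ≤ ⟪Y, vecMulVec uy uy⟫_ℝ := hpY.inner_vecMulVec_self ▸ hYlam
  have hsqrt := Real.sqrt_nonneg (1 / 2 + ε)
  subst hFX hFY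
  rw [hF, hF]
  refine ⟨⟨Submodule.normalizedShiftedProjection_mem _ _ _,
    Submodule.norm_normalizedShiftedProjection hX hXS (hsqrt.trans hXU) hγ.le, ?_⟩, ?_⟩
  · refine (Submodule.le_inner_normalizedShiftedProjection hX hXS hsqrt hXU hγ.le).trans ?_
    rw [inner_vecMulVec]
    exact dotProduct_mulVec_le_lamTop _ hpX.dotProduct_self
  · have hUV := norm_le_div_of_mul_norm_sq_le_inner hε (hpX.mul_norm_sub_sq_le_inner hpY hε.le)
    calc _ ≤ ‖X - Y‖ + γ * ‖vecMulVec ux ux - vecMulVec uy uy‖ :=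
          Submodule.norm_normalizedShiftedProjection_sub_le hX hXS (hsqrt.trans hXU) hY hYS
            (hsqrt.trans hYV) hγ.le
      _ ≤ ‖X - Y‖ + γ * (‖X - Y‖ / ε) := by gcongr
      _ = (1 + γ / ε) * ‖X - Y‖ := by ring
end
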